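/- arXiv:1905.10140 — 2 statements merged into one kernel-verified Lean document; each statement's English description precedes it below -/
import Mathlib

section
/- Let $\mathfrak{g}$ be a finite-dimensional Lie algebra with invariant symmetric tensor $\Omega \in \mathfrak{g}\otimes\mathfrak{g}$ satisfying $[\Omega^{(ij)}, \Omega^{(pi)}+\Omega^{(pj)}]=0$ for distinct $i,j,p$ and $[\Omega^{(ij)}, \Omega^{(pq)}]=0$ when $\{i,j\}\cap\{p,q\}=\emptyset$. Define the Gaudin Hamiltonians $\mathcal{H}^i := \sum_{j \neq i} \frac{\Omega^{(ij)}}{z_i - z_j}$ acting on $V_1 \otimes \cdots \otimes V_\ell$, for pairwise distinct complex numbers $z_1, \ldots, z_\ell$. Then $[\mathcal{H}^i, \mathcal{H}^p] = 0$ for all $i, p$. -/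
private lemma sum_lie' {L : Type*} [LieRing L] {ι : Type*} (s : Finset ι)
    (g : ι → L) (y : L) : ⁅∑ j ∈ s, g j, y⁆ = ∑ j ∈ s, ⁅g j, y⁆ := by
  induction s using Finset.cons_induction with
  | empty => simp
  | cons a s ha ih => simp [Finset.sum_cons, add_lie, ih]

private lemma lie_sum' {L : Type*} [LieRing L] {ι : Type*} (s : Finset ι)
    (g : ι → L) (y : L) : ⁅y, ∑ j ∈ s, g j⁆ = ∑ j ∈ s, ⁅y, g j⁆ := by
  induction s using Finset.cons_induction with
  | empty => simp
  | cons a s ha ih => simp [Finset.sum_cons, lie_add, ih]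


/-- The Gaudin Hamiltonians `H i = ∑_{j ≠ i} (z i - z j)⁻¹ • Ω i j` mutually
commute, given the standard commutation properties of the invariant tensor. -/
theorem gaudin_hamiltonians_commute
    {V : Type*} [AddCommGroup V] [Module ℂ V] {ℓ : ℕ}
    (Ω : Fin ℓ → Fin ℓ → Module.End ℂ V) (z : Fin ℓ → ℂ)
    (hz : Function.Injective z)
    (hsym : ∀ i j : Fin ℓ, Ω j i = Ω i j)
    (h3 : ∀ i j p : Fin ℓ, i ≠ j → p ≠ i → p ≠ j → ⁅Ω i j, Ω p i + Ω p j⁆ = 0)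
    (h4 : ∀ i j p q : Fin ℓ, i ≠ j → p ≠ q → p ≠ i → p ≠ j → q ≠ i → q ≠ j →
      ⁅Ω i j, Ω p q⁆ = 0) :
    ∀ i p : Fin ℓ,
      ⁅∑ j ∈ Finset.univ.erase i, (z i - z j)⁻¹ • Ω i j,
       ∑ j ∈ Finset.univ.erase p, (z p - z j)⁻¹ • Ω p j⁆ = 0 := by
  intro i p
  letI := LieRing.ofAssociativeRing (A := Module.End ℂ V)
  letI := LieAlgebra.ofAssociativeAlgebra (R := ℂ) (A := Module.End ℂ V)
  rcases eq_or_ne i p with rfl | hip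
  · exact lie_self _
  have hzne : ∀ a b : Fin ℓ, a ≠ b → z a - z b ≠ 0 :=
    fun a b h => sub_ne_zero.mpr (fun e => h (hz e))
  set f : Fin ℓ → Fin ℓ → Module.End ℂ V :=
    fun j q => ((z i - z j)⁻¹ * (z p - z q)⁻¹) • ⁅Ω i j, Ω p q⁆ with hf
  have expand : ⁅∑ j ∈ Finset.univ.erase i, (z i - z j)⁻¹ • Ω i j,
       ∑ j ∈ Finset.univ.erase p, (z p - z j)⁻¹ • Ω p j⁆
      = ∑ j ∈ Finset.univ.erase i, ∑ q ∈ Finset.univ.erase p, f j q := by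
    rw [sum_lie']
    refine Finset.sum_congr rfl fun j _ => ?_
    rw [lie_sum']
    refine Finset.sum_congr rfl fun q _ => ?_
    rw [smul_lie, lie_smul, smul_smul]
  rw [expand]
  set T : Finset (Fin ℓ) := (Finset.univ.erase i).erase p with hT
  have hpmem : p ∈ Finset.univ.erase i := by simp [Ne.symm hip]
  have himem : i ∈ Finset.univ.erase p := by simp [hip]
  -- the p-th outer term
  have gP : ∑ q ∈ Finset.univ.erase p, f p q = ∑ k ∈ T, f p k := by
    have hfi : f p i = 0 := by
      have h : Ω p i = Ω i p := hsym i p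
      simp [hf, h]
    rw [← Finset.insert_erase himem, Finset.sum_insert (Finset.notMem_erase _ _), hfi,
      zero_add, hT, Finset.erase_right_comm]
  -- inner sum for j ∈ T
  have gJ : ∀ j ∈ T, ∑ q ∈ Finset.univ.erase p, f j q = f j i + f j j := by
    intro j hj
    have hjp : j ≠ p := (Finset.mem_erase.mp hj).1
    have hji : j ≠ i := (Finset.mem_erase.mp (Finset.mem_erase.mp hj).2).1
    have hjmem : j ∈ (Finset.univ.erase p).erase i := by simp [hjp, hji]
    rw [← Finset.insert_erase himem, Finset.sum_insert (Finset.notMem_erase _ _),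
      ← Finset.insert_erase hjmem, Finset.sum_insert (Finset.notMem_erase _ _)]
    have hrest : ∑ q ∈ (((Finset.univ.erase p).erase i).erase j), f j q = 0 := by
      refine Finset.sum_eq_zero fun q hq => ?_
      have hqj : q ≠ j := (Finset.mem_erase.mp hq).1
      have hqi : q ≠ i := (Finset.mem_erase.mp (Finset.mem_erase.mp hq).2).1
      have hqp : q ≠ p :=
        (Finset.mem_erase.mp (Finset.mem_erase.mp (Finset.mem_erase.mp hq).2).2).1
      have h := h4 i j p q (Ne.symm hji) (Ne.symm hqp) (Ne.symm hip) (Ne.symm hjp) hqi hqj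
      simp [hf, h]
    rw [hrest, add_zero, add_comm]
  -- per-k vanishing
  have key : ∀ k ∈ T, f p k + (f k i + f k k) = 0 := by
    intro k hk
    have hkp : k ≠ p := (Finset.mem_erase.mp hk).1
    have hki : k ≠ i := (Finset.mem_erase.mp (Finset.mem_erase.mp hk).2).1
    have hik : i ≠ k := Ne.symm hki
    have hpk : p ≠ k := Ne.symm hkp
    have e1 : ⁅Ω i k, Ω p i⁆ = -⁅Ω i k, Ω p k⁆ := by
      have h := h3 i k p hik (Ne.symm hip) hpk
      rw [lie_add] at h
      exact eq_neg_of_add_eq_zero_left h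
    have e2 : ⁅Ω i p, Ω p k⁆ = -⁅Ω i k, Ω p k⁆ := by
      have h := h3 p k i hpk hip hik
      rw [lie_add] at h
      have h' : ⁅Ω p k, Ω i p⁆ = -⁅Ω p k, Ω i k⁆ := eq_neg_of_add_eq_zero_left h
      have hs1 : ⁅Ω i p, Ω p k⁆ = -⁅Ω p k, Ω i p⁆ :=
        neg_eq_iff_eq_neg.mp (lie_skew (Ω p k) (Ω i p))
      have hs2 : ⁅Ω p k, Ω i k⁆ = -⁅Ω i k, Ω p k⁆ :=
        neg_eq_iff_eq_neg.mp (lie_skew (Ω i k) (Ω p k))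
      rw [hs1, h', neg_neg, hs2]
    have h1 := hzne i p hip
    have h2 := hzne p k hpk
    have h3' := hzne i k hik
    have h4' := hzne p i (Ne.symm hip)
    have coef : -((z i - z p)⁻¹ * (z p - z k)⁻¹)
        + (-((z i - z k)⁻¹ * (z p - z i)⁻¹) + (z i - z k)⁻¹ * (z p - z k)⁻¹) = 0 := by
      field_simp
      ring
    show ((z i - z p)⁻¹ * (z p - z k)⁻¹) • ⁅Ω i p, Ω p k⁆
        + (((z i - z k)⁻¹ * (z p - z i)⁻¹) • ⁅Ω i k, Ω p i⁆
          + ((z i - z k)⁻¹ * (z p - z k)⁻¹) • ⁅Ω i k, Ω p k⁆) = 0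
    rw [e1, e2, smul_neg, smul_neg, ← neg_smul, ← neg_smul, ← add_smul, ← add_smul,
      coef, zero_smul]
  -- assemble
  rw [← Finset.insert_erase hpmem, Finset.sum_insert (Finset.notMem_erase _ _), gP,
    ← hT, Finset.sum_congr rfl gJ, ← Finset.sum_add_distrib]
  exact Finset.sum_eq_zero key
end

section
/- Let $K$ act by scalars $d_1,\ldots,d_\ell$ on modules $M_1,\ldots,M_\ell$ and let $d = \sum_i d_i$. Suppose $\mathring{R}^{(ij)}(z) = R^{(ij)}(z) + \frac{n(z_i+z_j)}{2(z_i-z_j)}K^{(i)}K^{(j)}$ when evaluated at $z = z_i/z_j$. Then $\psi$ satisfies $\kappa z_i\partial_{z_i}\psi = \big(\sum_{j\neq i}\mathring{R}^{(ij)}(z_i/z_j) + \mathbf{h}^{(i)}\big)\psi$ for all $i$ if and only if $\phi := \prod_{1\leq i<j\leq\ell}(z_i-z_j)^{-nd_id_j/\kappa}\prod_{r=1}^\ell z_r^{nd_r(d-d_r)/(2\kappa)}\,\psi$ satisfies $\kappa z_i\partial_{z_i}\phi = \big(\sum_{j\neq i}R^{(ij)}(z_i/z_j) + \mathbf{h}^{(i)}\big)\phi$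 for all $i$. -/
/-- Comparing trigonometric KZ equations for the central extension
(`R̊⁽ⁱʲ⁾(zᵢ/zⱼ) = R⁽ⁱʲ⁾(zᵢ/zⱼ) + n(zᵢ+zⱼ)/(2(zᵢ-zⱼ)) dᵢ dⱼ · id`) with the
ordinary ones: `ψ` solves the former iff
`φ = ∏_{i<j}(zᵢ-zⱼ)^{-n dᵢdⱼ/κ} ∏ᵣ zᵣ^{n dᵣ(d-dᵣ)/(2κ)} ψ` solves the
latter, with the scalar multiplier encoded by a nonvanishing function `f`
with the corresponding logarithmic derivative and `d = ∑ᵣ dᵣ`. -/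
theorem trig_kz_central_extension_equiv
    {V : Type*} [NormedAddCommGroup V] [NormedSpace ℂ V] {ℓ n : ℕ}
    (κ : ℂ) (hκ : κ ≠ 0) (d : Fin ℓ → ℂ)
    (R : Fin ℓ → Fin ℓ → (Fin ℓ → ℂ) → V →L[ℂ] V)
    (h : Fin ℓ → V →L[ℂ] V)
    (U : Set (Fin ℓ → ℂ)) (hU : IsOpen U)
    (hconf : ∀ z ∈ U, (∀ i : Fin ℓ, z i ≠ 0) ∧ ∀ i j : Fin ℓ, i ≠ j → z i ≠ z j)
    (ψ : (Fin ℓ → ℂ) → V) (hψ : DifferentiableOn ℂ ψ U)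
    (f : (Fin ℓ → ℂ) → ℂ) (hf0 : ∀ z ∈ U, f z ≠ 0)
    (hfd : DifferentiableOn ℂ f U)
    (hflog : ∀ z ∈ U, ∀ i : Fin ℓ,
      fderiv ℂ f z (Pi.single i 1)
        = ((∑ j ∈ Finset.univ.erase i,
              (-(n : ℂ) * d i * d j / κ) / (z i - z j))
            + ((n : ℂ) * d i * ((∑ r, d r) - d i) / (2 * κ)) / z i) * f z) :
    (∀ z ∈ U, ∀ i : Fin ℓ,
        (κ * z i) • fderiv ℂ ψ z (Pi.single i 1)
          = ∑ j ∈ Finset.univ.erase i,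
              ((R i j z) (ψ z)
                + ((n : ℂ) * (z i + z j) / (2 * (z i - z j)) * (d i * d j)) • ψ z)
            + (h i) (ψ z))
      ↔ (∀ z ∈ U, ∀ i : Fin ℓ,
        (κ * z i) • fderiv ℂ (fun w => f w • ψ w) z (Pi.single i 1)
          = ∑ j ∈ Finset.univ.erase i, (R i j z) (f z • ψ z)
            + (h i) (f z • ψ z)) := by

  refine forall₂_congr fun z hz => forall_congr' fun i => ?_
  have hz0 : z i ≠ 0 := (hconf z hz).1 i
  have hne : ∀ j ∈ Finset.univ.erase i, z i - z j ≠ 0 := fun j hj =>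
    sub_ne_zero.mpr ((hconf z hz).2 i j (Finset.ne_of_mem_erase hj).symm)
  set L : ℂ := (∑ j ∈ Finset.univ.erase i,
              (-(n : ℂ) * d i * d j / κ) / (z i - z j))
            + ((n : ℂ) * d i * ((∑ r, d r) - d i) / (2 * κ)) / z i with hL
  set S : ℂ := ∑ j ∈ Finset.univ.erase i,
      (n : ℂ) * (z i + z j) / (2 * (z i - z j)) * (d i * d j) with hSdef
  -- scalar identity
  have hDi : (∑ r, d r) - d i = ∑ j ∈ Finset.univ.erase i, d j := by
    rw [← Finset.sum_erase_add _ _ (Finset.mem_univ i)]; ring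
  have hS : κ * z i * L + S = 0 := by
    rw [hL, hSdef, hDi, mul_add, Finset.mul_sum]
    have h2 : κ * z i * (((n : ℂ) * d i * (∑ j ∈ Finset.univ.erase i, d j) / (2 * κ)) / z i)
        = ∑ j ∈ Finset.univ.erase i, (n : ℂ) * d i * d j / 2 := by
      calc κ * z i * (((n : ℂ) * d i * (∑ j ∈ Finset.univ.erase i, d j) / (2 * κ)) / z i)
          = (n : ℂ) * d i / 2 * (∑ j ∈ Finset.univ.erase i, d j) := by
            field_simp
        _ = ∑ j ∈ Finset.univ.erase i, (n : ℂ) * d i * d j / 2 := by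
            rw [Finset.mul_sum]; exact Finset.sum_congr rfl fun j _ => by ring
    rw [h2, add_assoc, ← Finset.sum_add_distrib, ← Finset.sum_add_distrib]
    refine Finset.sum_eq_zero fun j hj => ?_
    have hij := hne j hj
    field_simp
    ring
  -- derivative of the product
  have hψd : DifferentiableAt ℂ ψ z := hψ.differentiableAt (hU.mem_nhds hz)
  have hfd' : DifferentiableAt ℂ f z := hfd.differentiableAt (hU.mem_nhds hz)
  have hder : fderiv ℂ (fun w => f w • ψ w) z (Pi.single i 1)
      = f z • fderiv ℂ ψ z (Pi.single i 1) + (L * f z) • ψ z := by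
    rw [fderiv_fun_smul hfd' hψd]
    simp only [ContinuousLinearMap.add_apply, ContinuousLinearMap.smul_apply,
      ContinuousLinearMap.smulRight_apply]
    rw [hflog z hz i]
  rw [hder]
  have hLHS : (κ * z i) • (f z • fderiv ℂ ψ z (Pi.single i 1) + (L * f z) • ψ z)
      = f z • ((κ * z i) • fderiv ℂ ψ z (Pi.single i 1) + (-S) • ψ z) := by
    rw [smul_add, smul_add, smul_smul, smul_smul, smul_smul, smul_smul]
    congr 2
    · ring
    · linear_combination (f z) * hS
  have hRHS : (∑ j ∈ Finset.univ.erase i, (R i j z) (f z • ψ z) + (h i) (f z • ψ z))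
      = f z • (∑ j ∈ Finset.univ.erase i, (R i j z) (ψ z) + (h i) (ψ z)) := by
    simp only [map_smul, smul_add, Finset.smul_sum]
  rw [hLHS, hRHS, (smul_right_injective V (hf0 z hz)).eq_iff]
  rw [Finset.sum_add_distrib, ← Finset.sum_smul, ← hSdef, neg_smul, ← sub_eq_add_neg,
    sub_eq_iff_eq_add]
  constructor <;> intro H <;> rw [H] <;> abel
end
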